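/- arXiv:2604.05152 — 6 statements merged into one kernel-verified Lean document; each statement's English description precedes it below -/
import Mathlib

section
/- Let I be a finite multiset of positive integer item weights with bin capacity W, and suppose there exist two distinct items e, f in I with w_e + w_f = W. If I admits a perfect packing (a partition into parts each of total weight exactly W), then I admits a perfect packing in which e and f are in the same part. -/
lemma mem_msum {α : Type*} {a : α} {S : Multiset (Multiset α)} :
    a ∈ S.sum ↔ ∃ s ∈ S, a ∈ s := by
  induction S using Multiset.induction with
  | empty => simp
  | cons b S ih => simp [Multiset.sum_cons, ih, or_and_right, exists_or]

/-- If a finite multiset `I` of positive weights contains two distinct items `e, f`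
with `e + f = W`, and `I` admits a perfect packing (a partition into parts each of
total weight exactly `W`), then it admits a perfect packing where `e, f` share a part. -/
theorem stmt_1 (I : Multiset ℕ) (W : ℕ) (hpos : ∀ x ∈ I, 0 < x)
    (e f : ℕ) (he : e ∈ I) (hf : f ∈ I.erase e) (hef : e + f = W)
    (hpp : ∃ P : Multiset (Multiset ℕ), P.sum = I ∧ ∀ B ∈ P, B.sum = W) :
    ∃ P : Multiset (Multiset ℕ), (P.sum = I ∧ ∀ B ∈ P, B.sum = W) ∧
      ∃ B ∈ P, e ∈ B ∧ f ∈ B.erase e := by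
  obtain ⟨P, hPsum, hPW⟩ := hpp
  have heP : ∃ B ∈ P, e ∈ B := by
    rw [← mem_msum, hPsum]; exact he
  obtain ⟨B1, hB1P, heB1⟩ := heP
  obtain ⟨P', rfl⟩ := Multiset.exists_cons_of_mem hB1P
  by_cases hfB1 : f ∈ B1.erase e
  · exact ⟨B1 ::ₘ P', ⟨hPsum, hPW⟩, B1, Multiset.mem_cons_self _ _, heB1, hfB1⟩
  · have hIe : I.erase e = B1.erase e + P'.sum := by
      rw [← hPsum, Multiset.sum_cons, Multiset.erase_add_left_pos _ heB1]
    rw [hIe, Multiset.mem_add] at hf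
    rcases hf with hf | hf
    · exact absurd hf hfB1
    obtain ⟨B2, hB2P', hfB2⟩ := mem_msum.mp hf
    obtain ⟨P'', rfl⟩ := Multiset.exists_cons_of_mem hB2P'
    refine ⟨{e, f} ::ₘ (B1.erase e + B2.erase f) ::ₘ P'', ⟨?_, ?_⟩, {e, f},
      Multiset.mem_cons_self _ _, Multiset.mem_cons_self _ _, ?_⟩
    · rw [← hPsum]
      simp only [Multiset.sum_cons]
      have h1 := Multiset.cons_erase heB1
      have h2 := Multiset.cons_erase hfB2
      calc ({e, f} : Multiset ℕ) + (B1.erase e + B2.erase f + P''.sum)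
          = (e ::ₘ B1.erase e) + ((f ::ₘ B2.erase f) + P''.sum) := by
            have h3 : ({e, f} : Multiset ℕ) = {e} + {f} := rfl
            rw [h3, ← Multiset.singleton_add, ← Multiset.singleton_add]
            abel
        _ = B1 + (B2 + P''.sum) := by rw [h1, h2]
    · intro B hB
      rcases Multiset.mem_cons.mp hB with rfl | hB
      · show (e ::ₘ f ::ₘ 0).sum = W; simp [hef]
      rcases Multiset.mem_cons.mp hB with rfl | hB
      · have h1 : e + (B1.erase e).sum = W := by
          rw [← Multiset.sum_cons, Multiset.cons_erase heB1]
          exact hPW B1 (Multiset.mem_cons_self _ _)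
        have h2 : f + (B2.erase f).sum = W := by
          rw [← Multiset.sum_cons, Multiset.cons_erase hfB2]
          exact hPW B2 (Multiset.mem_cons_of_mem (Multiset.mem_cons_self _ _))
        rw [Multiset.sum_add]; omega
      · exact hPW B (Multiset.mem_cons_of_mem (Multiset.mem_cons_of_mem hB))
    · show f ∈ (e ::ₘ f ::ₘ 0).erase e
      simp
end

section
/- Let I be a finite set of items with positive integer weights and capacity W. Let a, b, c ∈ I be pairwise distinct such that w_a + w_b + w_c = W and every subset S ⊆ I with a ∈ S and weight-sum W satisfies S ∩ {b,c} ≠ ∅. If I admits a perfect packing, then I admits a perfect packing in which {a, b, c} is one of the parts. -/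
private lemma aux_pack {α : Type*} [DecidableEq α] (I : Finset α) (w : α → ℕ) (W : ℕ)
    (hW : 0 < W) (P : Finpartition I) (hP : ∀ B ∈ P.parts, ∑ z ∈ B, w z = W)
    (a x y : α) (hyI : y ∈ I)
    (A : Finset α) (hA : A ∈ P.parts) (haA : a ∈ A) (hxA : x ∈ A) (hyA : y ∉ A)
    (hax : a ≠ x) (hay : a ≠ y) (hxy : x ≠ y)
    (hs : w a + w x + w y = W) :
    ∃ Q : Finpartition I, (∀ B ∈ Q.parts, ∑ z ∈ B, w z = W) ∧
      ({a, x, y} : Finset α) ∈ Q.parts := by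
  obtain ⟨Y, hY, hyY⟩ := P.exists_mem hyI
  have hAY : A ≠ Y := fun h => hyA (h ▸ hyY)
  have hdisjAY : Disjoint A Y := P.disjoint hA hY hAY
  set T : Finset α := {a, x, y} with hT
  set L : Finset α := (A ∪ Y) \ T with hL
  have hTsub : T ⊆ A ∪ Y := by
    intro z hz
    simp only [hT, Finset.mem_insert, Finset.mem_singleton] at hz
    rcases hz with rfl | rfl | rfl
    · exact Finset.mem_union_left _ haA
    · exact Finset.mem_union_left _ hxA
    · exact Finset.mem_union_right _ hyY
  have hsumT : ∑ z ∈ T, w z = W := by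
    rw [hT, Finset.sum_insert (by simp [hax, hay]), Finset.sum_pair hxy]
    omega
  have hsumAY : ∑ z ∈ A ∪ Y, w z = W + W := by
    rw [Finset.sum_union hdisjAY, hP A hA, hP Y hY]
  have hsumL : ∑ z ∈ L, w z = W := by
    have := Finset.sum_sdiff (f := w) hTsub
    rw [hsumT, hsumAY, ← hL] at this
    omega
  set rest : Finset (Finset α) := P.parts \ {A, Y} with hrest
  have hparts_eq : P.parts = insert A (insert Y rest) := by
    ext u
    simp only [hrest, Finset.mem_insert, Finset.mem_sdiff, Finset.mem_singleton]
    constructor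
    · intro hu
      by_cases h1 : u = A
      · exact Or.inl h1
      by_cases h2 : u = Y
      · exact Or.inr (Or.inl h2)
      · exact Or.inr (Or.inr ⟨hu, by tauto⟩)
    · rintro (rfl | rfl | ⟨hu, _⟩) <;> assumption
  have hrest_facts : ∀ D ∈ rest, D ∈ P.parts ∧ D ≠ A ∧ D ≠ Y := by
    intro D hD
    simp only [hrest, Finset.mem_sdiff, Finset.mem_insert, Finset.mem_singleton] at hD
    tauto
  have hDdisj : ∀ D ∈ rest, Disjoint D (A ∪ Y) := by
    intro D hD
    obtain ⟨hDp, hDA, hDY⟩ := hrest_facts D hD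
    exact Finset.disjoint_union_right.2 ⟨P.disjoint hDp hA hDA, P.disjoint hDp hY hDY⟩
  set parts' : Finset (Finset α) := insert T (insert L rest) with hparts'
  have hsums : ∀ B ∈ parts', ∑ z ∈ B, w z = W := by
    intro B hB
    simp only [hparts', Finset.mem_insert] at hB
    rcases hB with rfl | rfl | hB
    · exact hsumT
    · exact hsumL
    · exact hP B (hrest_facts B hB).1
  refine ⟨⟨parts', ?_, ?_, ?_⟩, ?_, ?_⟩
  · rw [Finset.supIndep_iff_pairwiseDisjoint]
    intro u hu v hv huv
    simp only [hparts', Finset.coe_insert, Set.mem_insert_iff, Finset.mem_coe] at hu hv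
    have hTL : Disjoint T L := Finset.disjoint_sdiff
    rcases hu with rfl | rfl | hu <;> rcases hv with rfl | rfl | hv
    · exact absurd rfl huv
    · exact hTL
    · exact ((hDdisj v hv).mono_right hTsub).symm
    · exact hTL.symm
    · exact absurd rfl huv
    · exact ((hDdisj v hv).mono_right Finset.sdiff_subset).symm
    · exact (hDdisj u hu).mono_right hTsub
    · exact (hDdisj u hu).mono_right Finset.sdiff_subset
    · obtain ⟨hup, _, _⟩ := hrest_facts u hu
      obtain ⟨hvp, _, _⟩ := hrest_facts v hv
      exact P.disjoint hup hvp huv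
  · have h1 : T ⊔ L = A ∪ Y := Finset.union_sdiff_of_subset hTsub
    have h2 : P.parts.sup id = I := P.sup_parts
    rw [hparts_eq] at h2
    simp only [Finset.sup_insert, id] at h2 ⊢
    rw [hparts', Finset.sup_insert, Finset.sup_insert]
    simp only [id]
    rw [← h2, ← sup_assoc, ← sup_assoc, h1]
    rfl
  · intro hbot
    simp only [hparts', Finset.mem_insert, Finset.bot_eq_empty] at hbot
    rcases hbot with h | h | h
    · have : a ∈ (∅ : Finset α) := by rw [h, hT]; simp
      simp at this
    · have := hsumL
      rw [← h] at this
      simp at this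
      omega
    · exact P.bot_notMem ((hrest_facts _ h).1)
  · exact hsums
  · exact Finset.mem_insert_self _ _

/-- If `a, b, c ∈ I` are pairwise distinct with `w a + w b + w c = W` and every subset
`S ⊆ I` containing `a` of total weight `W` meets `{b, c}`, then whenever `I` admits a
perfect packing, it admits one in which `{a, b, c}` is one of the parts. -/
theorem stmt_3 {α : Type*} [DecidableEq α] (I : Finset α) (w : α → ℕ) (W : ℕ)
    (hpos : ∀ i ∈ I, 0 < w i)
    (a b c : α) (ha : a ∈ I) (hb : b ∈ I) (hc : c ∈ I)
    (hab : a ≠ b) (hac : a ≠ c) (hbc : b ≠ c)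
    (hsum : w a + w b + w c = W)
    (hfull : ∀ S ⊆ I, a ∈ S → ∑ x ∈ S, w x = W → b ∈ S ∨ c ∈ S)
    (hpp : ∃ P : Finpartition I, ∀ B ∈ P.parts, ∑ x ∈ B, w x = W) :
    ∃ P : Finpartition I, (∀ B ∈ P.parts, ∑ x ∈ B, w x = W) ∧
      ({a, b, c} : Finset α) ∈ P.parts := by
  obtain ⟨P, hP⟩ := hpp
  have hW : 0 < W := by have := hpos a ha; omega
  obtain ⟨A, hA, haA⟩ := P.exists_mem ha
  have hAI : A ⊆ I := P.le hA
  have hsumA := hP A hA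
  have hsumabc : ∑ z ∈ ({a, b, c} : Finset α), w z = W := by
    rw [Finset.sum_insert (by simp [hab, hac]), Finset.sum_pair hbc]; omega
  have hboth : b ∈ A → c ∈ A → ∃ P : Finpartition I,
      (∀ B ∈ P.parts, ∑ x ∈ B, w x = W) ∧ ({a, b, c} : Finset α) ∈ P.parts := by
    intro hbA hcA
    have hsub : ({a, b, c} : Finset α) ⊆ A := by
      intro z hz
      simp only [Finset.mem_insert, Finset.mem_singleton] at hz
      rcases hz with rfl | rfl | rfl <;> assumption
    have h0 : ∑ z ∈ A \ {a, b, c}, w z = 0 := by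
      have := Finset.sum_sdiff (f := w) hsub
      omega
    have hempty : A \ ({a, b, c} : Finset α) = ∅ := by
      rw [Finset.eq_empty_iff_forall_notMem]
      intro z hz
      have hz0 := (Finset.sum_eq_zero_iff.1 h0) z hz
      have := hpos z (hAI (Finset.mem_sdiff.1 hz).1)
      omega
    have hAeq : A = {a, b, c} :=
      le_antisymm (Finset.sdiff_eq_empty_iff_subset.1 hempty) hsub
    exact ⟨P, hP, hAeq ▸ hA⟩
  rcases hfull A hAI haA hsumA with hbA | hcA
  · by_cases hcA : c ∈ A
    · exact hboth hbA hcA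
    · exact aux_pack I w W hW P hP a b c hc A hA haA hbA hcA hab hac hbc hsum
  · by_cases hbA : b ∈ A
    · exact hboth hbA hcA
    · have heq : ({a, c, b} : Finset α) = ({a, b, c} : Finset α) := by
        rw [Finset.pair_comm c b]
      have := aux_pack I w W hW P hP a c b hb A hA haA hcA hbA hac hab hbc.symm
        (by omega)
      rw [heq] at this
      exact this
end

section
/- Let I be a finite set of items with positive integer weights, capacity W, and let a, b ∈ I be distinct items such that w_b is a mandatory weight for a, i.e., every subset P ⊆ I with a ∈ P and total weight W contains a subset T ⊆ P \ {a} with total weight w_b. If I admits a perfect packing, then I admits a perfect packing in which a and b lie in the same part. -/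
/-- If `w b` is a mandatory weight for `a` (every subset of `I` of total weight `W`
containing `a` has a subset of its other items of total weight `w b`), and `I` admits
a perfect packing, then `I` admits a perfect packing where `a` and `b` share a part. -/
theorem stmt_4 {α : Type*} [DecidableEq α] (I : Finset α) (w : α → ℕ) (W : ℕ)
    (hpos : ∀ i ∈ I, 0 < w i)
    (a b : α) (ha : a ∈ I) (hb : b ∈ I) (hab : a ≠ b)
    (hmand : ∀ P ⊆ I, a ∈ P → ∑ x ∈ P, w x = W →
      ∃ T ⊆ P.erase a, ∑ x ∈ T, w x = w b)
    (hpp : ∃ P : Finpartition I, ∀ B ∈ P.parts, ∑ x ∈ B, w x = W) :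
    ∃ P : Finpartition I, (∀ B ∈ P.parts, ∑ x ∈ B, w x = W) ∧
      ∃ B ∈ P.parts, a ∈ B ∧ b ∈ B := by
  obtain ⟨P, hP⟩ := hpp
  obtain ⟨A, hAparts, haA⟩ := P.exists_mem ha
  by_cases hbA : b ∈ A
  · exact ⟨P, hP, A, hAparts, haA, hbA⟩
  obtain ⟨B, hBparts, hbB⟩ := P.exists_mem hb
  have hABne : A ≠ B := fun h => hbA (h ▸ hbB)
  have hdisjAB : Disjoint A B := P.disjoint hAparts hBparts hABne
  have haB : a ∉ B := fun h => Finset.disjoint_left.1 hdisjAB haA h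
  obtain ⟨T, hT, hTsum⟩ := hmand A (P.le hAparts) haA (hP A hAparts)
  have hTA : T ⊆ A := hT.trans (Finset.erase_subset _ _)
  have haT : a ∉ T := fun h => (Finset.mem_erase.1 (hT h)).1 rfl
  have hbT : b ∉ T := fun h => hbA (hTA h)
  have hTne : T.Nonempty := by
    rcases T.eq_empty_or_nonempty with h | h
    · exfalso; rw [h, Finset.sum_empty] at hTsum
      have := hpos b hb; omega
    · exact h
  set A' : Finset α := insert b (A \ T) with hA'def
  set B' : Finset α := B.erase b ∪ T with hB'def
  have haA' : a ∈ A' := Finset.mem_insert_of_mem (Finset.mem_sdiff.2 ⟨haA, haT⟩)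
  have hbA' : b ∈ A' := Finset.mem_insert_self _ _
  -- membership characterizations
  have hmemA' : ∀ x, x ∈ A' ↔ x = b ∨ (x ∈ A ∧ x ∉ T) := by
    intro x; simp [hA'def, Finset.mem_sdiff]
  have hmemB' : ∀ x, x ∈ B' ↔ (x ≠ b ∧ x ∈ B) ∨ x ∈ T := by
    intro x; simp [hB'def, Finset.mem_erase]
  -- sums
  have hsumA' : ∑ x ∈ A', w x = W := by
    have h1 : ∑ x ∈ A \ T, w x + ∑ x ∈ T, w x = ∑ x ∈ A, w x :=
      Finset.sum_sdiff hTA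
    have h2 : b ∉ A \ T := fun h => hbA (Finset.mem_sdiff.1 h).1
    rw [hA'def, Finset.sum_insert h2]
    have := hP A hAparts
    omega
  have hsumB' : ∑ x ∈ B', w x = W := by
    have hd : Disjoint (B.erase b) T := by
      rw [Finset.disjoint_left]
      intro x hx hxT
      exact Finset.disjoint_left.1 hdisjAB (hTA hxT) (Finset.mem_of_mem_erase hx)
    rw [hB'def, Finset.sum_union hd, hTsum]
    have h1 : ∑ x ∈ B.erase b, w x + w b = ∑ x ∈ B, w x :=
      Finset.sum_erase_add _ _ hbB
    have := hP B hBparts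
    omega
  -- union
  have hABunion : A' ∪ B' = A ∪ B := by
    ext x
    simp only [Finset.mem_union, hmemA', hmemB']
    constructor
    · rintro ((rfl | ⟨h, _⟩) | (⟨_, h⟩ | h))
      · exact Or.inr hbB
      · exact Or.inl h
      · exact Or.inr h
      · exact Or.inl (hTA h)
    · rintro (h | h)
      · by_cases hx : x ∈ T
        · exact Or.inr (Or.inr hx)
        · exact Or.inl (Or.inr ⟨h, hx⟩)
      · by_cases hx : x = b
        · exact Or.inl (Or.inl hx)
        · exact Or.inr (Or.inl ⟨hx, h⟩)
  set rest : Finset (Finset α) := P.parts \ {A, B} with hrest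
  have hrestmem : ∀ C ∈ rest, C ∈ P.parts ∧ C ≠ A ∧ C ≠ B := by
    intro C hC
    simp only [hrest, Finset.mem_sdiff, Finset.mem_insert, Finset.mem_singleton] at hC
    tauto
  have hdisjA'C : ∀ C ∈ rest, Disjoint A' C := by
    intro C hC
    obtain ⟨hCp, hCA, hCB⟩ := hrestmem C hC
    rw [Finset.disjoint_left]
    intro x hx hxC
    rcases (hmemA' x).1 hx with rfl | ⟨hxA, _⟩
    · exact Finset.disjoint_left.1 (P.disjoint hBparts hCp (Ne.symm hCB)) hbB hxC
    · exact Finset.disjoint_left.1 (P.disjoint hAparts hCp (Ne.symm hCA)) hxA hxC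
  have hdisjB'C : ∀ C ∈ rest, Disjoint B' C := by
    intro C hC
    obtain ⟨hCp, hCA, hCB⟩ := hrestmem C hC
    rw [Finset.disjoint_left]
    intro x hx hxC
    rcases (hmemB' x).1 hx with ⟨_, hxB⟩ | hxT
    · exact Finset.disjoint_left.1 (P.disjoint hBparts hCp (Ne.symm hCB)) hxB hxC
    · exact Finset.disjoint_left.1 (P.disjoint hAparts hCp (Ne.symm hCA)) (hTA hxT) hxC
  have hdisjA'B' : Disjoint A' B' := by
    rw [Finset.disjoint_left]
    intro x hx hx'
    rcases (hmemA' x).1 hx with rfl | ⟨hxA, hxT⟩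
    · rcases (hmemB' x).1 hx' with ⟨h, _⟩ | h
      · exact h rfl
      · exact hbT h
    · rcases (hmemB' x).1 hx' with ⟨_, h⟩ | h
      · exact Finset.disjoint_left.1 hdisjAB hxA h
      · exact hxT h
  set newparts : Finset (Finset α) := insert A' (insert B' rest) with hnew
  have hmemnew : ∀ C, C ∈ newparts ↔ C = A' ∨ C = B' ∨ C ∈ rest := by
    intro C; simp [hnew]
  -- partition reconstruction of old parts
  have hpartseq : P.parts = insert A (insert B rest) := by
    ext C
    simp only [hrest, Finset.mem_insert, Finset.mem_sdiff, Finset.mem_singleton]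
    constructor
    · intro h
      by_cases h1 : C = A
      · exact Or.inl h1
      by_cases h2 : C = B
      · exact Or.inr (Or.inl h2)
      · exact Or.inr (Or.inr ⟨h, by tauto⟩)
    · rintro (rfl | rfl | ⟨h, _⟩) <;> first | exact hAparts | exact hBparts | exact h
  have hsup : newparts.sup id = I := by
    have hold : P.parts.sup id = I := P.sup_parts
    rw [hpartseq] at hold
    rw [hnew, Finset.sup_insert, Finset.sup_insert]
    rw [Finset.sup_insert, Finset.sup_insert] at hold
    have : (A' : Finset α) ⊔ (B' ⊔ rest.sup id) = (A' ∪ B') ⊔ rest.sup id := by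
      simp [Finset.sup_eq_union, Finset.union_assoc]
    rw [id, id, this, hABunion]
    rw [id, id] at hold
    rw [← hold]
    simp [Finset.sup_eq_union, Finset.union_assoc]
  have hsupIndep : newparts.SupIndep id := by
    rw [Finset.supIndep_iff_pairwiseDisjoint]
    intro C hC D hD hCD
    rw [hnew, Finset.coe_insert, Finset.coe_insert] at hC hD
    simp only [Set.mem_insert_iff, Finset.mem_coe] at hC hD
    rcases hC with rfl | rfl | hC <;> rcases hD with rfl | rfl | hD
    · exact absurd rfl hCD
    · exact hdisjA'B'
    · exact hdisjA'C _ hD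
    · exact hdisjA'B'.symm
    · exact absurd rfl hCD
    · exact hdisjB'C _ hD
    · exact (hdisjA'C _ hC).symm
    · exact (hdisjB'C _ hC).symm
    · exact P.disjoint (hrestmem _ hC).1 (hrestmem _ hD).1
        (fun h => hCD (by simpa using h))
  have hnotbot : ⊥ ∉ newparts := by
    intro h
    rcases (hmemnew _).1 h with h | h | h
    · exact (Finset.insert_ne_empty _ _) h.symm
    · have : T ⊆ (⊥ : Finset α) := h ▸ Finset.subset_union_right
      obtain ⟨t, ht⟩ := hTne
      exact absurd (this ht) (Finset.notMem_empty t)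
    · exact P.bot_notMem (hrestmem _ h).1
  refine ⟨⟨newparts, hsupIndep, hsup, hnotbot⟩, ?_, A', ?_, haA', hbA'⟩
  · intro C hC
    rcases (hmemnew _).1 hC with rfl | rfl | h
    · exact hsumA'
    · exact hsumB'
    · exact hP _ (hrestmem _ h).1
  · exact (hmemnew _).2 (Or.inl rfl)
end

section
/- Let I be a set of items with positive integer weights and capacity W, constructed as I = O ∪ {a_1, b_1, c_1, …, a_h, b_h, c_h} where for each k, w_{a_k} + w_{b_k} + w_{c_k} = W and there is no subset S ⊆ O ∪ {a_g, b_g, c_g : g < k} with (sum of weights of S) + w_{a_k} = W. Then the weights w_{a_1}, …, w_{a_h} are pairwise distinct. -/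
/-- In the ANI construction, where triplets `(a k, b k, c k)` of total weight `W` are added
iteratively to an original set `O`, subject to the condition that `a k` cannot be completed
to total weight `W` by a subset of the previously existing items, the weights
`w (a 0), …, w (a (h-1))` are pairwise distinct. -/
theorem stmt_6 {α : Type*} [DecidableEq α] (O : Finset α) (w : α → ℕ) (W h : ℕ)
    (hW : 0 < W) (hpos : ∀ i, 0 < w i)
    (a b c : ℕ → α)
    (hdist : ∀ k < h, a k ≠ b k ∧ a k ≠ c k ∧ b k ≠ c k)
    (hsum : ∀ k < h, w (a k) + w (b k) + w (c k) = W)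
    (hno : ∀ k < h, ¬ ∃ S ⊆ O ∪ (Finset.range k).biUnion (fun g => {a g, b g, c g}),
      (∑ x ∈ S, w x) + w (a k) = W) :
    ∀ k < h, ∀ g < h, k ≠ g → w (a k) ≠ w (a g) := by
  have key : ∀ k < h, ∀ g, g < k → w (a k) ≠ w (a g) := by
    intro k hk g hgk heq
    apply hno k hk
    refine ⟨{b g, c g}, ?_, ?_⟩
    · intro x hx
      simp only [Finset.mem_insert, Finset.mem_singleton] at hx
      apply Finset.mem_union_right
      simp only [Finset.mem_biUnion, Finset.mem_range]
      exact ⟨g, hgk, by rcases hx with h | h <;> simp [h]⟩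
    · have hbc : b g ≠ c g := (hdist g (hgk.trans hk)).2.2
      rw [Finset.sum_pair hbc, heq]
      have := hsum g (hgk.trans hk)
      omega
  intro k hk g hg hne heq
  rcases lt_or_gt_of_ne hne with hlt | hlt
  · exact key g hg k hlt heq.symm
  · exact key k hk g hlt heq
end

section
/- Let I be constructed as in the ANI construction: I = O ∪ {a_k, b_k, c_k : 1 ≤ k ≤ h}, where each triplet satisfies w_{a_k}+w_{b_k}+w_{c_k} = W and, for each k, no subset S of O ∪ {a_g,b_g,c_g : g < k} satisfies (sum of S) + w_{a_k} = W. Then every subset P ⊆ I containing a_h with total weight exactly W and |P| = 3 has weight multiset {w_{a_h}, w_{b_h}, w_{c_h}}. -/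
/-- In the ANI construction with `h ≥ 1` triplets, every 3-element subset of the final
instance `I` containing the last item `a (h-1)` and of total weight `W` has weight
multiset `{w (a (h-1)), w (b (h-1)), w (c (h-1))}`. -/
theorem stmt_7 {α : Type*} [DecidableEq α] (O : Finset α) (w : α → ℕ) (W h : ℕ)
    (hW : 0 < W) (hh : 0 < h) (hpos : ∀ i, 0 < w i)
    (a b c : ℕ → α)
    (hdist : ∀ k < h, a k ≠ b k ∧ a k ≠ c k ∧ b k ≠ c k)
    (hsum : ∀ k < h, w (a k) + w (b k) + w (c k) = W)
    (hno : ∀ k < h, ¬ ∃ S ⊆ O ∪ (Finset.range k).biUnion (fun g => {a g, b g, c g}),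
      (∑ x ∈ S, w x) + w (a k) = W) :
    ∀ P ⊆ O ∪ (Finset.range h).biUnion (fun g => {a g, b g, c g}),
      a (h - 1) ∈ P → P.card = 3 → ∑ x ∈ P, w x = W →
        P.val.map w = {w (a (h - 1)), w (b (h - 1)), w (c (h - 1))} := by
  intro P hP haP hcard hsumP
  set k := h - 1 with hk_def
  have hk : k < h := Nat.sub_lt hh one_pos
  -- the erased set sums to W - w (a k)
  have hSsum : (∑ x ∈ P.erase (a k), w x) + w (a k) = W := by
    rw [Finset.sum_erase_add P w haP, hsumP]
  -- it is not contained in the earlier instance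
  have hnotsub : ¬ (P.erase (a k) ⊆ O ∪ (Finset.range k).biUnion (fun g => {a g, b g, c g})) := by
    intro hsub
    exact hno k hk ⟨P.erase (a k), hsub, hSsum⟩
  obtain ⟨z, hzS, hznot⟩ := Finset.not_subset.mp hnotsub
  have hzP : z ∈ P := Finset.mem_of_mem_erase hzS
  have hzne : z ≠ a k := Finset.ne_of_mem_erase hzS
  -- z is in the last triple
  have hztriple : z = b k ∨ z = c k := by
    have hzI := hP hzP
    rw [Finset.mem_union] at hzI
    rcases hzI with hzO | hzB
    · exact absurd (Finset.mem_union_left _ hzO) hznot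
    · rw [Finset.mem_biUnion] at hzB
      obtain ⟨g, hg, hzg⟩ := hzB
      rw [Finset.mem_range] at hg
      have hgk : g = k := by
        by_contra hne
        have : g < k := by omega
        exact hznot (Finset.mem_union_right _ (Finset.mem_biUnion.mpr
          ⟨g, Finset.mem_range.mpr this, hzg⟩))
      subst hgk
      simp only [Finset.mem_insert, Finset.mem_singleton] at hzg
      rcases hzg with h1 | h1 | h1
      · exact absurd h1 hzne
      · exact Or.inl h1
      · exact Or.inr h1
  -- third element
  have hcard2 : ((P.erase (a k)).erase z).card = 1 := by
    rw [Finset.card_erase_of_mem hzS, Finset.card_erase_of_mem haP, hcard]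
  obtain ⟨t, ht⟩ := Finset.card_eq_one.mp hcard2
  -- multiset decomposition
  have hval : P.val = a k ::ₘ z ::ₘ {t} := by
    have h1 : P.val = a k ::ₘ P.val.erase (a k) := (Multiset.cons_erase haP).symm
    have h2 : P.val.erase (a k) = z ::ₘ (P.val.erase (a k)).erase z := by
      exact (Multiset.cons_erase (by exact hzS)).symm
    have h3 : (P.val.erase (a k)).erase z = {t} := by
      have := congrArg Finset.val ht
      exact this
    rw [h1, h2, h3]
  have hmap : P.val.map w = {w (a k), w z, w t} := by
    rw [hval]; rfl
  -- sum equation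
  have hsum3 : w (a k) + w z + w t = W := by
    have : ∑ x ∈ P, w x = (P.val.map w).sum := rfl
    rw [this, hmap] at hsumP
    simpa [add_assoc] using hsumP
  have habc := hsum k hk
  rcases hztriple with hz | hz
  · subst hz
    have : w t = w (c k) := by omega
    rw [hmap, this]
  · subst hz
    have : w t = w (b k) := by omega
    rw [hmap, this]
    have : ({w (a k), w (c k), w (b k)} : Multiset ℕ) = {w (a k), w (b k), w (c k)} := by
      simp only [Multiset.insert_eq_cons]
      exact congrArg _ (Multiset.cons_swap _ _ _)
    rw [this]
end

section
/- Let I be a finite set of items with positive integer weights sorted in non-increasing order, capacity W, and let a, b, c be pairwise distinct items with w_a ≥ w_b ≥ w_c, w_a + w_b + w_c = W, and such that every subset of I containing a with total weight W meets {b, c}. Then every subset P ⊆ I containing a with total weight W either contains an item of weight w_c distinct from a, or contains a subset T ⊆ P \ {a} of total weight w_c; that is, w_c is a mandatory weight for a. -/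
/-- If `a, b, c ∈ I` are pairwise distinct with `w a ≥ w b ≥ w c`, `w a + w b + w c = W`,
and every subset of `I` containing `a` with total weight `W` meets `{b, c}`, then `w c`
is a mandatory weight for `a`: every full pattern containing `a` contains another item of
weight `w c`, or contains a subset of its other items of total weight `w c`. -/
theorem stmt_11 {α : Type*} [DecidableEq α] (I : Finset α) (w : α → ℕ) (W : ℕ)
    (hpos : ∀ i ∈ I, 0 < w i)
    (a b c : α) (ha : a ∈ I) (hb : b ∈ I) (hc : c ∈ I)
    (hab : a ≠ b) (hac : a ≠ c) (hbc : b ≠ c)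
    (hord : w b ≤ w a ∧ w c ≤ w b)
    (hsum : w a + w b + w c = W)
    (hmeet : ∀ S ⊆ I, a ∈ S → ∑ x ∈ S, w x = W → b ∈ S ∨ c ∈ S) :
    ∀ P ⊆ I, a ∈ P → ∑ x ∈ P, w x = W →
      (∃ x ∈ P.erase a, w x = w c) ∨ (∃ T ⊆ P.erase a, ∑ x ∈ T, w x = w c) := by
  intro P hPI haP hPsum
  rcases hmeet P hPI haP hPsum with hbP | hcP
  · right
    refine ⟨(P.erase a).erase b, Finset.erase_subset _ _, ?_⟩
    have hbea : b ∈ P.erase a := Finset.mem_erase.mpr ⟨(Ne.symm hab), hbP⟩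
    have h1 : ∑ x ∈ P, w x = w a + ∑ x ∈ P.erase a, w x :=
      (Finset.add_sum_erase _ _ haP).symm
    have h2 : ∑ x ∈ P.erase a, w x = w b + ∑ x ∈ (P.erase a).erase b, w x :=
      (Finset.add_sum_erase _ _ hbea).symm
    omega
  · left
    exact ⟨c, Finset.mem_erase.mpr ⟨Ne.symm hac, hcP⟩, rfl⟩
end
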